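/- arXiv:1710.11343 — 2 statements merged into one kernel-verified Lean document; each statement's English description precedes it below -/
import Mathlib

section
/- Let p : X → X' be a surjection of finite sets and let H be an infinitesimal stochastic operator on ℝ^X such that there exists a linear operator H' : ℝ^{X'} → ℝ^{X'} with p_* H = H' p_*. Then such an H' is unique, it equals p_* H s for any stochastic section s : ℝ^{X'} → ℝ^X of p, and it is infinitesimal stochastic. -/
open scoped BigOperators

noncomputable section

/-- The pushforward of vectors along a map of finite sets:
`(f_* v) b = ∑_{a : f a = b} v a`. -/
def pushforward {A B : Type} [Fintype A] [DecidableEq B] (f : A → B) :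
    (A → ℝ) →ₗ[ℝ] (B → ℝ) where
  toFun v := fun b => ∑ a ∈ Finset.univ.filter (fun a => f a = b), v a
  map_add' u v := by
    funext b
    simp [Finset.sum_add_distrib]
  map_smul' c v := by
    funext b
    simp [Finset.mul_sum]

/-- The pullback of vectors along a map of finite sets: `f^* v = v ∘ f`. -/
def pullback {A B : Type} (f : A → B) : (B → ℝ) →ₗ[ℝ] (A → ℝ) where
  toFun v := v ∘ f
  map_add' _ _ := rfl
  map_smul' _ _ := rfl

/-- A probability distribution on a finite set: nonnegative components summing to 1. -/
def IsProbDist {A : Type} [Fintype A] (v : A → ℝ) : Prop :=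
  (∀ a, 0 ≤ v a) ∧ ∑ a, v a = 1

/-- A linear operator is stochastic if it maps probability distributions to
probability distributions. -/
def IsStochasticOp {A B : Type} [Fintype A] [Fintype B]
    (T : (A → ℝ) →ₗ[ℝ] (B → ℝ)) : Prop :=
  ∀ v, IsProbDist v → IsProbDist (T v)

/-- An operator `H` is infinitesimal stochastic if its off-diagonal matrix entries
`H_{ij} = (H e_j) i` are nonnegative and each column sums to zero. -/
def IsInfinitesimalStochastic {A : Type} [Fintype A] [DecidableEq A]
    (H : (A → ℝ) →ₗ[ℝ] (A → ℝ)) : Prop :=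
  (∀ i j, i ≠ j → 0 ≤ H (Pi.single j 1) i) ∧ ∀ j, ∑ i, H (Pi.single j 1) i = 0

/-- A stochastic section for `p : X → X'` is a stochastic operator
`s : ℝ^{X'} → ℝ^X` with `p_* ∘ s = 1`. -/
def IsStochasticSection {X X' : Type} [Fintype X] [Fintype X'] [DecidableEq X']
    (p : X → X') (s : (X' → ℝ) →ₗ[ℝ] (X → ℝ)) : Prop :=
  IsStochasticOp s ∧ pushforward p ∘ₗ s = LinearMap.id

/-- A matrix is stochastic if it maps probability distributions to probability
distributions. -/
def IsStochasticMat {A B : Type} [Fintype A] [Fintype B] (T : Matrix B A ℝ) : Prop :=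
  ∀ v, IsProbDist v → IsProbDist (T.mulVec v)

/-- A matrix is infinitesimal stochastic if its off-diagonal entries are nonnegative
and its columns sum to zero. -/
def IsInfStochMat {A : Type} [Fintype A] (H : Matrix A A ℝ) : Prop :=
  (∀ i j, i ≠ j → 0 ≤ H i j) ∧ ∀ j, ∑ i, H i j = 0

/-- A Markov semigroup: a continuous one-parameter semigroup of stochastic matrices. -/
def IsMarkovSemigroup {A : Type} [Fintype A] [DecidableEq A] (U : ℝ → Matrix A A ℝ) : Prop :=
  (∀ t : ℝ, 0 ≤ t → IsStochasticMat (U t)) ∧ U 0 = 1 ∧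
    (∀ s t : ℝ, 0 ≤ s → 0 ≤ t → U (s + t) = U s * U t) ∧
    ∀ v : A → ℝ, ContinuousOn (fun t => (U t).mulVec v) (Set.Ici 0)

/-- The (matrix of the) pushforward along `f`. -/
def pushMat {A B : Type} [DecidableEq B] (f : A → B) : Matrix B A ℝ :=
  Matrix.of fun b a => if f a = b then 1 else 0

/-- A commuting square of maps that is a pullback: every compatible pair has a
unique common preimage. -/
def IsPullbackSquare {A B C D : Type} (f : A → B) (g : A → C) (h : B → D) (k : C → D) : Prop :=
  (∀ a, h (f a) = k (g a)) ∧ ∀ (b : B) (c : C), h b = k c → ∃! a, f a = b ∧ g a = c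

/-- A commuting square of maps satisfying the universal property of a pushout. -/
def IsPushoutSquare {T X Y Z : Type} (o : T → X) (i' : T → Y) (j : X → Z) (k : Y → Z) : Prop :=
  (∀ t, j (o t) = k (i' t)) ∧
    ∀ (W : Type) (u : X → W) (u' : Y → W), (∀ t, u (o t) = u' (i' t)) →
      ∃! w : Z → W, (∀ x, w (j x) = u x) ∧ ∀ y, w (k y) = u' y

/-- The black-boxing of an open Markov process `S → (X,H) ← T`: the set of
steady-state boundary data `(i^* v, I, o^* v, O)`. -/
def blackBox {S X T : Type} [Fintype S] [Fintype T] [DecidableEq X]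
    (i : S → X) (o : T → X) (H : (X → ℝ) →ₗ[ℝ] (X → ℝ)) :
    Set ((S → ℝ) × (S → ℝ) × (T → ℝ) × (T → ℝ)) :=
  {w | ∃ (v : X → ℝ) (I : S → ℝ) (O : T → ℝ),
    H v + pushforward i I - pushforward o O = 0 ∧
    w = (pullback i v, I, pullback o v, O)}

/-- The direct sum of two operators, under the canonical identification
`ℝ^{X ⊕ Y} ≃ ℝ^X ⊕ ℝ^Y`. -/
def dsum {A B : Type} (H : (A → ℝ) →ₗ[ℝ] (A → ℝ)) (G : (B → ℝ) →ₗ[ℝ] (B → ℝ)) :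
    (A ⊕ B → ℝ) →ₗ[ℝ] (A ⊕ B → ℝ) :=
  (LinearEquiv.sumArrowLequivProdArrow A B ℝ ℝ).symm.toLinearMap ∘ₗ
    (H.prodMap G) ∘ₗ (LinearEquiv.sumArrowLequivProdArrow A B ℝ ℝ).toLinearMap

/-! A lumping `H'` of `H` along `p` is pinned down by `H' (p_* v) = p_* (H v)`, because `p_*` is
onto when `p` is. Its `j'`-th column is therefore `p_*` of the `j`-th column of `H` for any
`j ∈ p⁻¹ j'`; summing the entries of a column of `H` over the fibres of `p` shows that it again
has zero sum and nonnegative entries off the diagonal. -/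

section Pushforward

variable {A B : Type} [Fintype A] [DecidableEq B] (f : A → B)

theorem pushforward_apply (v : A → ℝ) (b : B) :
    pushforward f v b = ∑ a ∈ Finset.univ.filter (fun a => f a = b), v a :=
  rfl

theorem pushforward_single [DecidableEq A] (a : A) (c : ℝ) :
    pushforward f (Pi.single a c) = Pi.single (f a) c := by
  funext b
  simp [pushforward_apply, Pi.single_apply, eq_comm]

theorem sum_pushforward [Fintype B] (v : A → ℝ) : ∑ b, pushforward f v b = ∑ a, v a :=
  Finset.sum_fiberwise _ f v

theorem pushforward_surjective [DecidableEq A] [Fintype B] (hf : Function.Surjective f) :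
    Function.Surjective (pushforward f) := by
  intro w
  refine ⟨∑ b, Pi.single (Function.surjInv hf b) (w b), ?_⟩
  simp only [map_sum, pushforward_single, Function.surjInv_eq hf, Finset.univ_sum_single]

end Pushforward

theorem LinearMap.eq_comp_comp_of_comp_eq_comp {R M N : Type*} [Semiring R] [AddCommMonoid M]
    [AddCommMonoid N] [Module R M] [Module R N] {g : M →ₗ[R] N} {H : M →ₗ[R] M}
    {H' : N →ₗ[R] N} (hcomm : g ∘ₗ H = H' ∘ₗ g) {s : N →ₗ[R] M}
    (hs : g ∘ₗ s = LinearMap.id) :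
    H' = g ∘ₗ H ∘ₗ s := by
  rw [← LinearMap.comp_assoc, hcomm, LinearMap.comp_assoc, hs, LinearMap.comp_id]

section Lumping

variable {X X' : Type} [Fintype X] [DecidableEq X] [DecidableEq X'] {p : X → X'}
  {H : (X → ℝ) →ₗ[ℝ] (X → ℝ)} {H' : (X' → ℝ) →ₗ[ℝ] (X' → ℝ)}

theorem lumping_apply_single (hcomm : pushforward p ∘ₗ H = H' ∘ₗ pushforward p) (x : X) :
    H' (Pi.single (p x) 1) = pushforward p (H (Pi.single x 1)) := by
  rw [← pushforward_single p x 1]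
  exact (LinearMap.congr_fun hcomm (Pi.single x 1)).symm

theorem IsInfinitesimalStochastic.lumping [Fintype X'] (hH : IsInfinitesimalStochastic H)
    (hp : Function.Surjective p) (hcomm : pushforward p ∘ₗ H = H' ∘ₗ pushforward p) :
    IsInfinitesimalStochastic H' := by
  constructor
  · intro i' j' hij'
    obtain ⟨j, rfl⟩ := hp j'
    rw [lumping_apply_single hcomm, pushforward_apply]
    refine Finset.sum_nonneg fun i hi => hH.1 i j fun hij => hij' ?_
    rw [← (Finset.mem_filter.mp hi).2, hij]
  · intro j'
    obtain ⟨j, rfl⟩ := hp j'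
    rw [lumping_apply_single hcomm, sum_pushforward]
    exact hH.2 j

end Lumping

/-- If `p : X → X'` is surjective, `H` is infinitesimal stochastic, and
`H'` satisfies `p_* H = H' p_*`, then `H'` is unique, equals `p_* H s` for every
stochastic section `s` of `p`, and is infinitesimal stochastic. -/
theorem lumped_operator_unique {X X' : Type} [Fintype X] [Fintype X']
    [DecidableEq X] [DecidableEq X'] (p : X → X') (hp : Function.Surjective p)
    (H : (X → ℝ) →ₗ[ℝ] (X → ℝ)) (hH : IsInfinitesimalStochastic H)
    (H' : (X' → ℝ) →ₗ[ℝ] (X' → ℝ))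
    (hcomm : pushforward p ∘ₗ H = H' ∘ₗ pushforward p) :
    (∀ H'' : (X' → ℝ) →ₗ[ℝ] (X' → ℝ),
        pushforward p ∘ₗ H = H'' ∘ₗ pushforward p → H'' = H') ∧
    (∀ s : (X' → ℝ) →ₗ[ℝ] (X → ℝ), IsStochasticSection p s →
        H' = pushforward p ∘ₗ H ∘ₗ s) ∧
    IsInfinitesimalStochastic H' :=
  ⟨fun _ hH'' =>
      (LinearMap.cancel_right (pushforward_surjective p hp)).mp (hH''.symm.trans hcomm),
    fun _ hs => LinearMap.eq_comp_comp_of_comp_eq_comp hcomm hs.2,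
    hH.lumping hp hcomm⟩

end
end

section
/- Let S →^i (X, H) ←^o T and T →^{i'} (Y, G) ←^{o'} U be composable open Markov processes, and let j : X → Z, k : Y → Z exhibit Z as a pushout of o : T → X and i' : T → Y. Suppose w ∈ ℝ^Z, I ∈ ℝ^S, O' ∈ ℝ^U satisfy (H ⊙ G)(w) + (j∘i)_*(I) − (k∘o')_*(O') = 0, where H ⊙ G = j_* H j^* + k_* G k^*. Set v = j^*(w) and v' = k^*(w). Then o^*(v) = i'^*(v'), and there exists O ∈ ℝ^T such that H(v) + i_*(I) − o_*(O) = 0 and G(v') + i'_*(O) − o'_*(O') = 0. -/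
open scoped BigOperators

noncomputable section

/-! Because `o` and `i'` are injective, the pushout square is also a pullback square and `j`, `k`
are injective. Hence `j^* j_* = 1 = k^* k_*`, and Beck–Chevalley gives `j^* k_* = o_* i'^*` and
`k^* j_* = i'_* o^*`. Pulling the composite steady-state equation back along `j` yields the
equation on `X` with boundary flow `O = i'^* (o'_* O' - G v')`; pulling it back along `k` yields
the equation on `Y`, once `O = o^* (H v + i_* I)` is read off from the first via `o^* o_* = 1`. -/

section

variable {A B C D : Type}

theorem pushforward_comp [Fintype A] [Fintype B] [DecidableEq B] [DecidableEq C]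
    (f : A → B) (g : B → C) (v : A → ℝ) :
    pushforward (g ∘ f) v = pushforward g (pushforward f v) := by
  funext c
  simp only [pushforward, LinearMap.coe_mk, AddHom.coe_mk, Function.comp_apply]
  rw [← Finset.sum_fiberwise_of_maps_to (g := f) (t := Finset.univ.filter (fun b => g b = c))
    (by simp)]
  refine Finset.sum_congr rfl fun b hb => Finset.sum_congr ?_ fun _ _ => rfl
  ext a
  simp only [Finset.mem_filter, Finset.mem_univ, true_and] at hb ⊢
  exact ⟨And.right, fun h => ⟨h ▸ hb, h⟩⟩

theorem pullback_pushforward_of_injective [Fintype A] [DecidableEq B] {f : A → B}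
    (hf : Function.Injective f) (v : A → ℝ) : pullback f (pushforward f v) = v := by
  funext a
  have hfib : Finset.univ.filter (fun a' => f a' = f a) = {a} := by
    ext; simp [hf.eq_iff]
  simp [pullback, pushforward, hfib]

-- Beck–Chevalley.
theorem IsPullbackSquare.pullback_pushforward [Fintype A] [Fintype B] [DecidableEq C]
    [DecidableEq D] {f : A → B} {g : A → C} {h : B → D} {k : C → D}
    (hsq : IsPullbackSquare f g h k) (v : B → ℝ) :
    pullback k (pushforward h v) = pushforward g (pullback f v) := by
  funext c
  symm
  refine Finset.sum_bij (fun a _ => f a) ?_ ?_ ?_ fun _ _ => rfl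
  · intro a ha
    simp only [Finset.mem_filter, Finset.mem_univ, true_and] at ha ⊢
    rw [hsq.1, ha]
  · intro a₁ ha₁ a₂ ha₂ hf
    simp only [Finset.mem_filter, Finset.mem_univ, true_and] at ha₁ ha₂
    obtain ⟨a, -, huniq⟩ := hsq.2 (f a₁) c (by rw [hsq.1, ha₁])
    exact (huniq a₁ ⟨rfl, ha₁⟩).trans (huniq a₂ ⟨hf.symm, ha₂⟩).symm
  · intro b hb
    simp only [Finset.mem_filter, Finset.mem_univ, true_and] at hb
    obtain ⟨a, ⟨hfa, hga⟩, -⟩ := hsq.2 b c hb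
    exact ⟨a, by simpa using hga, hfa⟩

theorem IsPullbackSquare.symm {f : A → B} {g : A → C} {h : B → D} {k : C → D}
    (hsq : IsPullbackSquare f g h k) : IsPullbackSquare g f k h :=
  ⟨fun a => (hsq.1 a).symm, fun c b hcb => by
    simpa only [and_comm] using hsq.2 b c hcb.symm⟩

end

namespace IsPushoutSquare

variable {T X Y Z : Type} {o : T → X} {i' : T → Y} {j : X → Z} {k : Y → Z}

theorem symm (hpo : IsPushoutSquare o i' j k) : IsPushoutSquare i' o k j := by
  refine ⟨fun t => (hpo.1 t).symm, fun W u' u hu => ?_⟩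
  obtain ⟨w, ⟨hwj, hwk⟩, huniq⟩ := hpo.2 W u u' fun t => (hu t).symm
  exact ⟨w, ⟨hwk, hwj⟩, fun w' hw' => huniq w' ⟨hw'.2, hw'.1⟩⟩

theorem exists_separating_pred (hpo : IsPushoutSquare o i' j k) (hi' : Function.Injective i') (x₀ : X) :
    ∃ P : Z → Prop, (∀ x, P (j x) = (x = x₀)) ∧ ∀ y, P (k y) = ∃ t, o t = x₀ ∧ i' t = y := by
  obtain ⟨P, hP, -⟩ := hpo.2 Prop (· = x₀) (fun y => ∃ t, o t = x₀ ∧ i' t = y) fun t => by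
    simp [hi'.eq_iff]
  exact ⟨P, hP⟩

theorem injective_left (hpo : IsPushoutSquare o i' j k) (hi' : Function.Injective i') :
    Function.Injective j := by
  intro x₀ x hx
  obtain ⟨P, hPj, -⟩ := hpo.exists_separating_pred hi' x₀
  have : P (j x) := by rw [← hx, hPj]
  exact ((hPj x).mp this).symm

theorem exists_of_apply_eq (hpo : IsPushoutSquare o i' j k) (hi' : Function.Injective i')
    {x : X} {y : Y} (hxy : j x = k y) : ∃ t, o t = x ∧ i' t = y := by
  obtain ⟨P, hPj, hPk⟩ := hpo.exists_separating_pred hi' x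
  have : P (k y) := by rw [← hxy, hPj]
  exact (hPk y).mp this

theorem isPullbackSquare (hpo : IsPushoutSquare o i' j k) (ho : Function.Injective o)
    (hi' : Function.Injective i') : IsPullbackSquare o i' j k := by
  refine ⟨hpo.1, fun x y hxy => ?_⟩
  obtain ⟨t, hot, hit⟩ := hpo.exists_of_apply_eq hi' hxy
  exact ⟨t, ⟨hot, hit⟩, fun t' ht' => ho (ht'.1.trans hot.symm)⟩

end IsPushoutSquare

theorem composite_steady_state_restricts_general
    {S X T Y U Z : Type}
    [Fintype S] [Fintype X] [Fintype T] [Fintype Y] [Fintype U]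
    [DecidableEq X] [DecidableEq Y] [DecidableEq Z]
    (i : S → X) (o : T → X) (ho : Function.Injective o)
    (H : (X → ℝ) →ₗ[ℝ] (X → ℝ))
    (i' : T → Y) (o' : U → Y) (hi' : Function.Injective i')
    (G : (Y → ℝ) →ₗ[ℝ] (Y → ℝ))
    (j : X → Z) (k : Y → Z) (hpo : IsPushoutSquare o i' j k)
    (w : Z → ℝ) (I : S → ℝ) (O' : U → ℝ)
    (hw : (pushforward j ∘ₗ H ∘ₗ pullback j + pushforward k ∘ₗ G ∘ₗ pullback k) w
        + pushforward (j ∘ i) I - pushforward (k ∘ o') O' = 0) :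
    pullback o (pullback j w) = pullback i' (pullback k w) ∧
    ∃ O : T → ℝ,
      H (pullback j w) + pushforward i I - pushforward o O = 0 ∧
      G (pullback k w) + pushforward i' O - pushforward o' O' = 0 := by
  have hpb := hpo.isPullbackSquare ho hi'
  have hj := hpo.injective_left hi'
  have hk := hpo.symm.injective_left ho
  have hwX := congrArg (pullback j) hw
  have hwY := congrArg (pullback k) hw
  simp only [LinearMap.add_apply, LinearMap.comp_apply, map_add, map_sub, map_zero,
    pushforward_comp, pullback_pushforward_of_injective hj, pullback_pushforward_of_injective hk,
    hpb.pullback_pushforward, hpb.symm.pullback_pushforward] at hwX hwY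
  let O := pullback i' (pushforward o' O' - G (pullback k w))
  have hX : H (pullback j w) + pushforward i I - pushforward o O = 0 := by
    rw [← hwX]
    simp only [O, map_sub]
    abel
  have hO : O = pullback o (H (pullback j w) + pushforward i I) := by
    rw [sub_eq_zero.mp hX, pullback_pushforward_of_injective ho]
  refine ⟨funext fun t => congrArg w (hpo.1 t), O, hX, ?_⟩
  rw [← hwY, hO, map_add, map_add]
  abel

/-- A steady state of the composite of two open Markov processes
restricts to compatible steady states of the pieces, for a suitable flow `O` on the
common boundary. -/
theorem composite_steady_state_restricts
    {S X T Y U Z : Type}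
    [Fintype S] [Fintype X] [Fintype T] [Fintype Y] [Fintype U]
    [DecidableEq X] [DecidableEq Y] [DecidableEq Z]
    (i : S → X) (o : T → X) (hi : Function.Injective i) (ho : Function.Injective o)
    (H : (X → ℝ) →ₗ[ℝ] (X → ℝ)) (hH : IsInfinitesimalStochastic H)
    (i' : T → Y) (o' : U → Y) (hi' : Function.Injective i') (ho' : Function.Injective o')
    (G : (Y → ℝ) →ₗ[ℝ] (Y → ℝ)) (hG : IsInfinitesimalStochastic G)
    (j : X → Z) (k : Y → Z) (hpo : IsPushoutSquare o i' j k)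
    (w : Z → ℝ) (I : S → ℝ) (O' : U → ℝ)
    (hw : (pushforward j ∘ₗ H ∘ₗ pullback j + pushforward k ∘ₗ G ∘ₗ pullback k) w
        + pushforward (j ∘ i) I - pushforward (k ∘ o') O' = 0) :
    pullback o (pullback j w) = pullback i' (pullback k w) ∧
    ∃ O : T → ℝ,
      H (pullback j w) + pushforward i I - pushforward o O = 0 ∧
      G (pullback k w) + pushforward i' O - pushforward o' O' = 0 :=
  composite_steady_state_restricts_general i o ho H i' o' hi' G j k hpo w I O' hw

end
end
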